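/- arXiv:1503.08418 — 2 statements merged into one kernel-verified Lean document; each statement's English description precedes it below -/
import Mathlib

section
/- For all n ≥ 0, the degenerate poly-Bernoulli polynomials of index k = 2 satisfy β_n^{(2)}(x|λ) = Σ_{l=0}^{n} C(n,l) (B_l/(l+1)) β_{n−l}(x|λ), where B_l = B_l(0) are the Bernoulli numbers. -/
open Finset

/-- The generalized falling factorial `(x|λ)ₙ = x(x−λ)(x−2λ)⋯(x−(n−1)λ)`. -/
noncomputable def genFall (lam x : ℂ) (n : ℕ) : ℂ :=
  ∏ i ∈ Finset.range n, (x - (i : ℂ) * lam)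

/-- The formal power series `(1+λt)^{x/λ} = Σ_{n≥0} (x|λ)ₙ tⁿ/n!`. -/
noncomputable def degExp (lam x : ℂ) : PowerSeries ℂ :=
  PowerSeries.mk fun n => genFall lam x n / (n.factorial : ℂ)

/-- The formal power series `1 - e^{-t}`. -/
noncomputable def oneSubExpNeg : PowerSeries ℂ :=
  PowerSeries.mk fun n => if n = 0 then 0 else -((-1 : ℂ) ^ n) / (n.factorial : ℂ)

/-- The formal power series `Li_k(1 - e^{-t}) = Σ_{n≥1} (1-e^{-t})ⁿ/nᵏ`; since
`(1-e^{-t})ⁿ` has order at least `n`, the coefficient of `tˡ` only involves `n ≤ l`. -/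
noncomputable def polyLogComp (k : ℤ) : PowerSeries ℂ :=
  PowerSeries.mk fun l =>
    ∑ n ∈ Finset.Icc 1 l, ((n : ℂ) ^ k)⁻¹ * PowerSeries.coeff l (oneSubExpNeg ^ n)

/-- Stirling numbers of the second kind `S₂(n, k)`. -/
def S2 : ℕ → ℕ → ℕ
  | 0, 0 => 1
  | 0, _ + 1 => 0
  | _ + 1, 0 => 0
  | n + 1, k + 1 => (k + 1) * S2 n (k + 1) + S2 n k

/-!
Write `u = 1 - e^{-t}`. Then `u' = 1 - u`, and since `uⁿ` has order `n` the series
`Li_k(u)` can be differentiated termwise on truncations, giving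
`u · (Li_k(u))' = (1 - u) · Li_{k-1}(u)`. The geometric series `Li_0(u) = u / (1 - u)` then
yields `Li_1(u) = t`, hence `(Li_2(u))' = t e^{-t} / (1 - e^{-t}) = t / (e^t - 1)`, the Bernoulli
generating function, and integrating, `Li_2(1 - e^{-t}) = t · Σ B_l/(l+1) tˡ/l!`. Dividing the
two defining identities by `(1+λt)^{1/λ} - 1` shows that the generating function of `βₙ⁽²⁾(x|λ)`
is this series times that of `βₙ(x|λ)`; comparing coefficients gives the formula.
-/

open PowerSeries
open scoped Nat

theorem PowerSeries.coeff_mul_congr_right {R : Type*} [Semiring R] (p : R⟦X⟧) {f g : R⟦X⟧}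
    {n : ℕ} (h : ∀ i ≤ n, coeff i f = coeff i g) : coeff n (p * f) = coeff n (p * g) := by
  rw [coeff_mul, coeff_mul]
  exact sum_congr rfl fun q hq => by rw [h q.2 (Finset.HasAntidiagonal.antidiagonal.snd_le hq)]

theorem PowerSeries.coeff_mk_div_factorial_mul {K : Type*} [Field K] [CharZero K]
    (a b : ℕ → K) (n : ℕ) :
    coeff n ((mk fun l => a l / l !) * mk fun l => b l / l !) =
      (∑ l ∈ range (n + 1), (n.choose l : K) * a l * b (n - l)) / n ! := by
  rw [coeff_mul, Nat.sum_antidiagonal_eq_sum_range_succ_mk, sum_div]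
  refine sum_congr rfl fun l hl => ?_
  have hn : (n ! : K) ≠ 0 := Nat.cast_ne_zero.2 n.factorial_ne_zero
  rw [coeff_mk, coeff_mk, Nat.cast_choose K (mem_range_succ_iff.1 hl)]
  field_simp

theorem degExp_one_sub_one_ne_zero (lam : ℂ) : degExp lam 1 - 1 ≠ 0 := fun h => by
  simpa [degExp, genFall, coeff_one] using congrArg (coeff 1) h

section OneSubExpNeg

local notation "u" => oneSubExpNeg

theorem oneSubExpNeg_eq : u = 1 - evalNegHom (exp ℂ) := by
  ext l
  simp only [oneSubExpNeg, evalNegHom, coeff_mk, map_sub, coeff_one, coeff_rescale, coeff_exp]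
  split_ifs with hl
  · simp [hl]
  · simp [div_eq_mul_inv, mul_comm]

theorem exp_mul_one_sub_oneSubExpNeg : exp ℂ * (1 - u) = 1 := by
  rw [oneSubExpNeg_eq, sub_sub_cancel, exp_mul_exp_neg_eq_one]

theorem derivative_oneSubExpNeg : d⁄dX ℂ u = 1 - u := by
  ext l
  rw [coeff_derivative, map_sub, coeff_one]
  rcases eq_or_ne l 0 with rfl | hl
  · simp [oneSubExpNeg]
  · simp only [oneSubExpNeg, coeff_mk, hl, l.succ_ne_zero, if_false, Nat.factorial_succ]
    push_cast
    field_simp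
    ring

theorem coeff_oneSubExpNeg_pow_of_lt {n l : ℕ} (h : l < n) : coeff l (u ^ n) = 0 := by
  have hX : (X : ℂ⟦X⟧) ∣ u := by simp [X_dvd_iff, oneSubExpNeg]
  exact X_pow_dvd_iff.mp (pow_dvd_pow_of_dvd hX n) l h

end OneSubExpNeg

section PolyLog

local notation "u" => oneSubExpNeg

noncomputable def polyLogTrunc (k : ℤ) (N : ℕ) : ℂ⟦X⟧ :=
  ∑ n ∈ Icc 1 N, C ((n : ℂ) ^ k)⁻¹ * u ^ n

theorem coeff_polyLogComp_eq_coeff_polyLogTrunc (k : ℤ) {l N : ℕ} (h : l ≤ N) :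
    coeff l (polyLogComp k) = coeff l (polyLogTrunc k N) := by
  rw [polyLogComp, coeff_mk, polyLogTrunc, map_sum]
  refine sum_subset (Icc_subset_Icc_right h) (fun n hn hnl => ?_) |>.trans
    (sum_congr rfl fun n _ => (coeff_C_mul ..).symm)
  rw [coeff_oneSubExpNeg_pow_of_lt (by simp_all), mul_zero]

theorem oneSubExpNeg_mul_derivative_polyLogTrunc (k : ℤ) (N : ℕ) :
    u * d⁄dX ℂ (polyLogTrunc k N) = (1 - u) * polyLogTrunc (k - 1) N := by
  rw [polyLogTrunc, polyLogTrunc, map_sum, mul_sum, mul_sum]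
  refine sum_congr rfl fun n hn => ?_
  obtain ⟨m, rfl⟩ : ∃ m, n = m + 1 := Nat.exists_eq_add_one.2 (mem_Icc.1 hn).1
  have hm : ((m + 1 : ℕ) : ℂ) ≠ 0 := Nat.cast_ne_zero.2 m.succ_ne_zero
  rw [Derivation.leibniz, derivative_C, smul_zero, add_zero, smul_eq_mul, derivative_pow,
    derivative_oneSubExpNeg, zpow_sub_one₀ hm, mul_inv, inv_inv, map_mul,
    ← map_natCast (C (R := ℂ)), Nat.add_sub_cancel, pow_succ]
  ring

theorem oneSubExpNeg_mul_derivative_polyLogComp (k : ℤ) :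
    u * d⁄dX ℂ (polyLogComp k) = (1 - u) * polyLogComp (k - 1) := by
  ext l
  calc coeff l (u * d⁄dX ℂ (polyLogComp k))
      = coeff l (u * d⁄dX ℂ (polyLogTrunc k (l + 1))) :=
        coeff_mul_congr_right _ fun i hi => by
          rw [coeff_derivative, coeff_derivative,
            coeff_polyLogComp_eq_coeff_polyLogTrunc k (N := l + 1) (by omega)]
    _ = coeff l ((1 - u) * polyLogTrunc (k - 1) (l + 1)) := by
        rw [oneSubExpNeg_mul_derivative_polyLogTrunc]
    _ = coeff l ((1 - u) * polyLogComp (k - 1)) :=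
        coeff_mul_congr_right _ fun i hi =>
          (coeff_polyLogComp_eq_coeff_polyLogTrunc _ (by omega)).symm

theorem one_sub_oneSubExpNeg_mul_polyLogTrunc_zero (N : ℕ) :
    (1 - u) * polyLogTrunc 0 N = u - u ^ (N + 1) := by
  induction N with
  | zero => simp [polyLogTrunc]
  | succ N ih =>
    rw [polyLogTrunc, sum_Icc_succ_top (by omega), mul_add, ← polyLogTrunc, ih]
    simp only [zpow_zero, inv_one, map_one, one_mul]
    ring

theorem one_sub_oneSubExpNeg_mul_polyLogComp_zero : (1 - u) * polyLogComp 0 = u := by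
  ext l
  rw [coeff_mul_congr_right _ fun i hi => coeff_polyLogComp_eq_coeff_polyLogTrunc 0 hi,
    one_sub_oneSubExpNeg_mul_polyLogTrunc_zero, map_sub,
    coeff_oneSubExpNeg_pow_of_lt (by omega), sub_zero]

theorem constantCoeff_polyLogComp (k : ℤ) : constantCoeff (polyLogComp k) = 0 := by
  rw [← coeff_zero_eq_constantCoeff_apply, polyLogComp, coeff_mk]
  simp

theorem polyLogComp_one : polyLogComp 1 = X := by
  have hu : u ≠ 0 := fun h => by simpa [oneSubExpNeg] using congrArg (coeff 1) h
  have hD : d⁄dX ℂ (polyLogComp 1) = 1 := mul_left_cancel₀ hu <| by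
    rw [oneSubExpNeg_mul_derivative_polyLogComp, sub_self,
      one_sub_oneSubExpNeg_mul_polyLogComp_zero, mul_one]
  exact derivative.ext (by rw [hD, derivative_X]) (by simp [constantCoeff_polyLogComp])

theorem derivative_polyLogComp_two : d⁄dX ℂ (polyLogComp 2) = bernoulliPowerSeries ℂ := by
  have hexp : exp ℂ - 1 ≠ 0 := fun h => by
    simpa [coeff_exp, coeff_one] using congrArg (coeff 1) h
  refine mul_right_cancel₀ hexp ?_
  rw [bernoulliPowerSeries_mul_exp_sub_one]
  calc d⁄dX ℂ (polyLogComp 2) * (exp ℂ - 1)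
      = exp ℂ * (u * d⁄dX ℂ (polyLogComp 2)) := by
        rw [← mul_one (d⁄dX ℂ (polyLogComp 2)), ← exp_mul_one_sub_oneSubExpNeg]; ring
    _ = X := by
        rw [oneSubExpNeg_mul_derivative_polyLogComp, show (2 : ℤ) - 1 = 1 by norm_num,
          polyLogComp_one, ← mul_assoc, exp_mul_one_sub_oneSubExpNeg, one_mul]

end PolyLog

noncomputable def bernoulliDivSuccSeries : ℂ⟦X⟧ :=
  mk fun l => ((bernoulli l : ℚ) : ℂ) / ((l : ℂ) + 1) / l !

theorem polyLogComp_two : polyLogComp 2 = bernoulliDivSuccSeries * X := by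
  refine derivative.ext ?_ (by simp [constantCoeff_polyLogComp])
  ext l
  have hl : (l : ℂ) + 1 ≠ 0 := by exact_mod_cast l.succ_ne_zero
  rw [derivative_polyLogComp_two, coeff_derivative, coeff_succ_mul_X, bernoulliPowerSeries,
    bernoulliDivSuccSeries, coeff_mk, coeff_mk, map_div₀, eq_ratCast, map_natCast]
  field_simp

/-- `βₙ⁽²⁾(x|λ) = Σ_{l=0}^{n} C(n,l) (B_l/(l+1)) β_{n−l}(x|λ)`, where `B_l`
are the Bernoulli numbers. -/
theorem degenerate_poly_bernoulli_two_formula (lam : ℂ) (β2 β : ℕ → ℂ → ℂ)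
    (hβ2 : ∀ x : ℂ,
      (PowerSeries.mk fun n => β2 n x / (n.factorial : ℂ)) * (degExp lam 1 - 1)
        = polyLogComp 2 * degExp lam x)
    (hβ : ∀ x : ℂ,
      (PowerSeries.mk fun n => β n x / (n.factorial : ℂ)) * (degExp lam 1 - 1)
        = PowerSeries.X * degExp lam x)
    (n : ℕ) (x : ℂ) :
    β2 n x = ∑ l ∈ Finset.range (n + 1),
      (n.choose l : ℂ) * (((bernoulli l : ℚ) : ℂ) / ((l : ℂ) + 1)) * β (n - l) x := by
  have hegf : (mk fun n => β2 n x / n !) = bernoulliDivSuccSeries * mk fun n => β n x / n ! :=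
    mul_right_cancel₀ (degExp_one_sub_one_ne_zero lam) <| by
      rw [hβ2, polyLogComp_two, mul_assoc, mul_assoc, ← hβ]
  have hcoeff := congrArg (coeff n) hegf
  rw [coeff_mk, bernoulliDivSuccSeries, coeff_mk_div_factorial_mul] at hcoeff
  exact (div_left_inj' (Nat.cast_ne_zero.2 n.factorial_ne_zero)).1 hcoeff
end

section
/- The generating function identity (1/d) Σ_{a=0}^{d−1} (dt/((1+λt)^{d/λ}−1)) (1+λt)^{(a+x)/λ} = t/((1+λt)^{1/λ}−1) · (1+λt)^{x/λ} holds for every positive integer d; consequently, as exponential generating function coefficients, Σ_{a=0}^{d−1} d^{n−1} β_n((a+x)/d | λ/d) = β_n(x|λ) for all n ≥ 0. -/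
open Finset

/-! Write `E_y = (1+λt)^{y/λ}`. Chu–Vandermonde for the generalized falling factorial gives
`E_a E_b = E_{a+b}`, so `Σ_{a<d} E_{a+x}` is a geometric sum in `E_1` and
`(Σ_{a<d} E_{a+x}) (E_1 - 1) = E_x (E_d - 1)`. The substitution `t ↦ dt` turns `E_{y/d}` for
the parameter `λ/d` into `E_y` for `λ`, so the rescaled generating functions `F_a` of
`β_n((a+x)/d | λ/d)` satisfy `F_a (E_d - 1) = d t E_{a+x}`. Summing over `a` and cancelling the
nonzero series `E_1 - 1` and `E_d - 1` gives `Σ_a F_a = d Σ_n β_n(x|λ) tⁿ/n!`; compare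
coefficients. -/

open PowerSeries

theorem genFall_succ (lam x : ℂ) (n : ℕ) :
    genFall lam x (n + 1) = genFall lam x n * (x - n * lam) :=
  prod_range_succ _ n

theorem genFall_zero_succ (lam : ℂ) (n : ℕ) : genFall lam 0 (n + 1) = 0 :=
  prod_eq_zero (mem_range.2 n.succ_pos) (by simp)

theorem genFall_mul_mul (c lam z : ℂ) (n : ℕ) :
    genFall (c * lam) (c * z) n = c ^ n * genFall lam z n := by
  have hfactor (i : ℕ) : c * z - i * (c * lam) = c * (z - i * lam) := by ring
  simp only [genFall, hfactor, prod_mul_distrib, prod_const, card_range]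

-- The new factor splits as `a + b - nλ = (a - iλ) + (b - jλ)` for `i + j = n`.
theorem genFall_add (lam a b : ℂ) (n : ℕ) :
    genFall lam (a + b) n =
      ∑ ij ∈ antidiagonal n, (n.choose ij.1 : ℂ) * (genFall lam a ij.1 * genFall lam b ij.2) := by
  induction n with
  | zero => simp [genFall]
  | succ n ih =>
    rw [sum_antidiagonal_choose_succ_mul (fun i j => genFall lam a i * genFall lam b j),
      ← sum_add_distrib, genFall_succ, ih, sum_mul]
    refine sum_congr rfl fun ij hij => ?_
    rw [HasAntidiagonal.mem_antidiagonal] at hij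
    have hn : (n : ℂ) = ij.1 + ij.2 := by exact_mod_cast hij.symm
    rw [Nat.choose_symm_of_eq_add hij.symm, genFall_succ, genFall_succ, hn]
    ring

theorem degExp_mul (lam a b : ℂ) : degExp lam a * degExp lam b = degExp lam (a + b) := by
  ext n
  rw [coeff_mul]
  simp only [degExp, coeff_mk, genFall_add, sum_div]
  refine sum_congr rfl fun ij hij => ?_
  obtain ⟨i, j⟩ := ij
  rw [HasAntidiagonal.mem_antidiagonal] at hij
  subst hij
  have : ((i + j).factorial : ℂ) ≠ 0 := Nat.cast_ne_zero.2 (Nat.factorial_ne_zero _)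
  rw [Nat.cast_add_choose]
  field_simp

theorem degExp_zero (lam : ℂ) : degExp lam 0 = 1 := by
  ext (_ | n)
  · simp [degExp, genFall]
  · simp [degExp, genFall_zero_succ, coeff_one]

theorem degExp_natCast (lam : ℂ) (n : ℕ) : degExp lam n = degExp lam 1 ^ n := by
  induction n with
  | zero => simp [degExp_zero]
  | succ n ih => rw [pow_succ, ← ih, degExp_mul, Nat.cast_succ]

theorem rescale_degExp (c lam z : ℂ) : rescale c (degExp lam z) = degExp (c * lam) (c * z) := by
  ext n
  simp [degExp, coeff_rescale, genFall_mul_mul, mul_div_assoc]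

theorem degExp_sub_one_ne_zero (lam : ℂ) {y : ℂ} (hy : y ≠ 0) : degExp lam y - 1 ≠ 0 := by
  intro h
  have := congrArg (coeff 1) h
  simp [degExp, genFall, coeff_one, hy] at this

-- A geometric sum: `degExp lam (a + x) = degExp lam 1 ^ a * degExp lam x`.
theorem sum_degExp_natCast_add_mul (lam x : ℂ) (d : ℕ) :
    (∑ a ∈ range d, degExp lam (a + x)) * (degExp lam 1 - 1) =
      degExp lam x * (degExp lam d - 1) := by
  simp only [← degExp_mul, degExp_natCast, mul_comm _ (degExp lam x)]
  rw [← mul_sum, mul_assoc, geom_sum_mul]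

theorem sum_rescale_of_mul_degExp_sub_one (F : ℂ → ℂ → PowerSeries ℂ)
    (hF : ∀ mu y, F mu y * (degExp mu 1 - 1) = X * degExp mu y) (lam x : ℂ) {d : ℕ}
    (hd : (d : ℂ) ≠ 0) :
    ∑ a ∈ range d, rescale (d : ℂ) (F (lam / d) ((a + x) / d)) = C (d : ℂ) * F lam x := by
  have hrescaled (a : ℕ) : rescale (d : ℂ) (F (lam / d) ((a + x) / d)) * (degExp lam d - 1) =
      C (d : ℂ) * (X * degExp lam (a + x)) := by
    have h := congrArg (rescale (d : ℂ)) (hF (lam / d) ((a + x) / d))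
    rwa [map_mul, map_sub, map_one, map_mul, rescale_X, rescale_degExp, rescale_degExp,
      mul_one, mul_div_cancel₀ _ hd, mul_div_cancel₀ _ hd, mul_assoc] at h
  apply mul_right_cancel₀ (degExp_sub_one_ne_zero lam (one_ne_zero (α := ℂ)))
  apply mul_right_cancel₀ (degExp_sub_one_ne_zero lam hd)
  calc (∑ a ∈ range d, rescale (d : ℂ) (F (lam / d) ((a + x) / d))) * (degExp lam 1 - 1) *
        (degExp lam d - 1)
      = C (d : ℂ) * X * ((∑ a ∈ range d, degExp lam (a + x)) * (degExp lam 1 - 1)) := by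
        rw [mul_right_comm, sum_mul, sum_congr rfl fun a _ => hrescaled a, ← mul_sum, ← mul_sum]
        ring
    _ = C (d : ℂ) * F lam x * (degExp lam 1 - 1) * (degExp lam d - 1) := by
        rw [sum_degExp_natCast_add_mul, mul_assoc (C _) (F lam x), hF]
        ring

/-- the distribution-type generating function identity
`(1/d) Σ_{a=0}^{d−1} (dt/((1+λt)^{d/λ}−1))(1+λt)^{(a+x)/λ} = t/((1+λt)^{1/λ}−1)·(1+λt)^{x/λ}`
(stated multiplicatively, with denominators cleared), and consequently
`Σ_{a=0}^{d−1} d^{n−1} βₙ((a+x)/d | λ/d) = βₙ(x|λ)` for all `n ≥ 0`. -/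
theorem degenerate_bernoulli_distribution (lam x : ℂ) (d : ℕ) (hd : 0 < d)
    (β : ℂ → ℕ → ℂ → ℂ)
    (hβ : ∀ mu y : ℂ,
      (PowerSeries.mk fun n => β mu n y / (n.factorial : ℂ)) * (degExp mu 1 - 1)
        = PowerSeries.X * degExp mu y) :
    (∑ a ∈ Finset.range d, PowerSeries.X * degExp lam ((a : ℂ) + x) * (degExp lam 1 - 1))
        = PowerSeries.X * degExp lam x * (degExp lam (d : ℂ) - 1) ∧
      ∀ n : ℕ, ∑ a ∈ Finset.range d,
          (d : ℂ) ^ ((n : ℤ) - 1) * β (lam / (d : ℂ)) n (((a : ℂ) + x) / (d : ℂ))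
        = β lam n x := by
  have hdC : (d : ℂ) ≠ 0 := Nat.cast_ne_zero.2 hd.ne'
  refine ⟨?_, fun n => ?_⟩
  · rw [mul_assoc, ← sum_degExp_natCast_add_mul, sum_mul, mul_sum]
    exact sum_congr rfl fun _ _ => by ring
  · have h := congrArg (coeff n) (sum_rescale_of_mul_degExp_sub_one _ hβ lam x hdC)
    simp only [map_sum, coeff_rescale, coeff_C_mul, coeff_mk, ← mul_div_assoc, ← sum_div] at h
    rw [div_left_inj' (Nat.cast_ne_zero.2 n.factorial_ne_zero)] at h
    calc ∑ a ∈ range d, (d : ℂ) ^ ((n : ℤ) - 1) * β (lam / d) n ((a + x) / d)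
        = (d : ℂ)⁻¹ * ∑ a ∈ range d, (d : ℂ) ^ n * β (lam / d) n ((a + x) / d) := by
          rw [mul_sum, zpow_sub_one₀ hdC, zpow_natCast]
          exact sum_congr rfl fun _ _ => by ring
      _ = β lam n x := by rw [h, inv_mul_cancel_left₀ hdC]
end
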